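/- Let H be a cocommutative bialgebra over a commutative ring R, F a Drinfel'd twist on H with R-matrix ℛ := F₂₁ · F⁻¹ and ℛ⁻¹ = τ(ℛ) = Σ_k R_k ⊗ R^k, and let L be a Lie algebra in H-modules equipped with an H-invariant R-bilinear form b : L × L → R (i.e. Σ b(ρ(h₍₁₎)(v), ρ(h₍₂₎)(w)) = ε(h) · b(v, w) for all h ∈ H) which is cyclic with respect to the bracket: b(v₀, ⁅v₁, v₂⁆) = b(v₂, ⁅v₀, v₁⁆) for all v₀, v₁, v₂ ∈ L. Then the twisted pairing ⟨v, w⟩_⋆ := Σ_k b(f̄^k(v), f̄_k(w)) is braided cyclic with respect to the twisted bracket [x, y]_⋆ := Σ_k ⁅f̄^k(x), f̄_k(y)⁆: for all v₀, v₁, v₂ ∈ L, ⟨v₀, [v₁, v₂]_⋆⟩_⋆ = Σ_{k,l} ⟨R_k(R_l(v₂)), [R^k(v₀), R^l(v₁)]_⋆⟩_⋆. -/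

import Mathlib

open scoped TensorProduct

noncomputable section

/-- `Δ ⊗ id` as an algebra homomorphism `H ⊗ H → (H ⊗ H) ⊗ H`. -/
def comulTensorId (R H : Type*) [CommRing R] [Ring H] [Bialgebra R H] :
    (H ⊗[R] H) →ₐ[R] (H ⊗[R] H) ⊗[R] H :=
  Algebra.TensorProduct.map (Bialgebra.comulAlgHom R H) (AlgHom.id R H)

/-- `id ⊗ Δ` as an algebra homomorphism `H ⊗ H → H ⊗ (H ⊗ H)`. -/
def idTensorComul (R H : Type*) [CommRing R] [Ring H] [Bialgebra R H] :
    (H ⊗[R] H) →ₐ[R] H ⊗[R] (H ⊗[R] H) :=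
  Algebra.TensorProduct.map (AlgHom.id R H) (Bialgebra.comulAlgHom R H)

/-- `F` is a Drinfel'd twist on the bialgebra `H` with two-sided inverse `Finv`:
it is invertible and satisfies the 2-cocycle condition
`(F ⊗ 1) · (Δ ⊗ id)(F) = (1 ⊗ F) · (id ⊗ Δ)(F)` in `H ⊗ H ⊗ H`. -/
def IsDrinfeldTwist (R : Type*) {H : Type*} [CommRing R] [Ring H] [Bialgebra R H]
    (F Finv : H ⊗[R] H) : Prop :=
  F * Finv = 1 ∧ Finv * F = 1 ∧
    (TensorProduct.assoc R H H H) ((F ⊗ₜ[R] (1 : H)) * comulTensorId R H F) =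
      ((1 : H) ⊗ₜ[R] F) * idTensorComul R H F

/-- The `R`-matrix `ℛ := F₂₁ · F⁻¹` associated to a Drinfel'd twist, where
`F₂₁ = τ(F)` and `τ` is the flip of `H ⊗ H`. -/
def Rmat (R : Type*) {H : Type*} [CommRing R] [Ring H] [Bialgebra R H]
    (F Finv : H ⊗[R] H) : H ⊗[R] H :=
  (Algebra.TensorProduct.comm R H H) F * Finv

/-- The bialgebra `H` is cocommutative: `τ ∘ Δ = Δ`. -/
def IsCocommutative (R : Type*) (H : Type*) [CommRing R] [Ring H] [Bialgebra R H] : Prop :=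
  ∀ x : H, (Algebra.TensorProduct.comm R H H) (Coalgebra.comul (R := R) x) =
    Coalgebra.comul (R := R) x

/-- The action of an element of `H ⊗ H` on `M ⊗ N`, acting with the first leg on `M`
and the second leg on `N` through the given representations. -/
def legAct {R H : Type*} [CommRing R] [Ring H] [Algebra R H]
    {M N : Type*} [AddCommGroup M] [Module R M] [AddCommGroup N] [Module R N]
    (ρM : H →ₐ[R] Module.End R M) (ρN : H →ₐ[R] Module.End R N) :
    H ⊗[R] H →ₗ[R] (M ⊗[R] N →ₗ[R] M ⊗[R] N) :=
  (TensorProduct.homTensorHomMap (RingHom.id R) M N M N).comp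
    (TensorProduct.map ρM.toLinearMap ρN.toLinearMap)

/-- The Lie bracket of `L` as an `R`-bilinear map. -/
def lieBil (R L : Type*) [CommRing R] [LieRing L] [LieAlgebra R L] :
    L →ₗ[R] L →ₗ[R] L :=
  LinearMap.mk₂ R (fun x y => ⁅x, y⁆) add_lie smul_lie lie_add lie_smul

/-- `ρ` makes the `R`-Lie algebra `L` into a Lie algebra in `H`-modules:
`ρ(h)⁅x, y⁆ = Σ ⁅ρ(h₍₁₎)(x), ρ(h₍₂₎)(y)⁆`. -/
def IsHLieAlgebra (R : Type*) {H L : Type*} [CommRing R] [Ring H] [Bialgebra R H]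
    [LieRing L] [LieAlgebra R L] (ρ : H →ₐ[R] Module.End R L) : Prop :=
  ∀ (h : H) (x y : L),
    ρ h ⁅x, y⁆ =
      TensorProduct.lift (lieBil R L)
        (legAct ρ ρ (Coalgebra.comul (R := R) h) (x ⊗ₜ[R] y))

/-- The twisted bracket `[x, y]_⋆ := Σ ⁅f̄ᵏ(x), f̄ₖ(y)⁆`, as a linear map on `L ⊗ L`. -/
def starBracket {R H L : Type*} [CommRing R] [Ring H] [Bialgebra R H]
    [LieRing L] [LieAlgebra R L] (ρ : H →ₐ[R] Module.End R L) (Finv : H ⊗[R] H) :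
    L ⊗[R] L →ₗ[R] L :=
  (TensorProduct.lift (lieBil R L)).comp (legAct ρ ρ Finv)

/-- The twisted pairing `⟨v, w⟩_⋆ := Σ b(f̄ᵏ(v), f̄ₖ(w))`, as a linear map on `V ⊗ V`. -/
def starPair {R H V : Type*} [CommRing R] [Ring H] [Bialgebra R H]
    [AddCommGroup V] [Module R V] (ρ : H →ₐ[R] Module.End R V)
    (b : V →ₗ[R] V →ₗ[R] R) (Finv : H ⊗[R] H) : V ⊗[R] V →ₗ[R] R :=
  (TensorProduct.lift b).comp (legAct ρ ρ Finv)

/-- The action of an element of `H ⊗ (H ⊗ H)` on `L ⊗ (L ⊗ L)`, acting leg by leg. -/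
def legAct3 {R H L : Type*} [CommRing R] [Ring H] [Algebra R H]
    [AddCommGroup L] [Module R L] (ρ : H →ₐ[R] Module.End R L) :
    H ⊗[R] (H ⊗[R] H) →ₗ[R]
      (L ⊗[R] (L ⊗[R] L) →ₗ[R] L ⊗[R] (L ⊗[R] L)) :=
  (TensorProduct.homTensorHomMap (RingHom.id R) L (L ⊗[R] L) L (L ⊗[R] L)).comp
    (TensorProduct.map ρ.toLinearMap (legAct ρ ρ))

/-!
Because `ρ` makes `L` a Lie algebra in `H`-modules, `⟨v₀, [v₁, v₂]_⋆⟩_⋆` is the form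
`x ⊗ y ⊗ z ↦ b(x, ⁅y, z⁆)` evaluated on `Φ · (v₀ ⊗ v₁ ⊗ v₂)`, where
`Φ := (id ⊗ Δ)(F⁻¹) · (1 ⊗ F⁻¹)`; the right-hand side is the same form evaluated on
`Φ · ℛ⁻¹₁₂ ℛ⁻¹₁₃ · (v₂ ⊗ v₀ ⊗ v₁)`. Cyclicity of `b` lets us rotate the three legs, so it
suffices that the cyclic rotation of `Φ · ℛ⁻¹₁₂ ℛ⁻¹₁₃` is `Φ`. In `H ⊗ H ⊗ H` this follows from
the 2-cocycle condition and the hexagon relation `F₁₂ · (Δ ⊗ id)(ℛ) · F⁻¹₁₂ = ℛ₁₃ ℛ₂₃`, which holds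
because for cocommutative `H` the untwisted `R`-matrix is `1 ⊗ 1`.
-/

theorem mul_cancel_left_of_mul_eq_one {M : Type*} [Monoid M] {a a' : M} (h : a' * a = 1)
    (b : M) : a' * (a * b) = b := by
  rw [← mul_assoc, h, one_mul]

section Legs

variable {R H : Type*} [CommRing R] [Ring H] [Algebra R H]

local notation "τ" => Algebra.TensorProduct.comm R H H

def leg12 : H ⊗[R] H →ₐ[R] H ⊗[R] (H ⊗[R] H) :=
  Algebra.TensorProduct.map (AlgHom.id R H) Algebra.TensorProduct.includeLeft

def leg13 : H ⊗[R] H →ₐ[R] H ⊗[R] (H ⊗[R] H) :=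
  Algebra.TensorProduct.map (AlgHom.id R H) Algebra.TensorProduct.includeRight

def leg23 : H ⊗[R] H →ₐ[R] H ⊗[R] (H ⊗[R] H) :=
  Algebra.TensorProduct.includeRight

def swap23 : H ⊗[R] (H ⊗[R] H) ≃ₐ[R] H ⊗[R] (H ⊗[R] H) :=
  Algebra.TensorProduct.congr AlgEquiv.refl τ

/-- `a ⊗ (b ⊗ c) ↦ b ⊗ (c ⊗ a)`. -/
def rotate3 : H ⊗[R] (H ⊗[R] H) ≃ₐ[R] H ⊗[R] (H ⊗[R] H) :=
  (Algebra.TensorProduct.comm R H (H ⊗[R] H)).trans (Algebra.TensorProduct.assoc R R R H H H)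

theorem comm_comm_apply (u : H ⊗[R] H) : τ (τ u) = u :=
  TensorProduct.comm_comm R H H u

theorem rotate3_leg12 (u : H ⊗[R] H) : rotate3 (leg12 u) = leg13 (τ u) := by
  induction u using TensorProduct.induction_on with
  | zero => simp
  | tmul a b => simp [rotate3, leg12, leg13]
  | add x y hx hy => simp only [map_add, hx, hy]

theorem rotate3_leg13 (u : H ⊗[R] H) : rotate3 (leg13 u) = leg23 (τ u) := by
  induction u using TensorProduct.induction_on with
  | zero => simp
  | tmul a b => simp [rotate3, leg13, leg23]
  | add x y hx hy => simp only [map_add, hx, hy]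

theorem rotate3_leg23 (u : H ⊗[R] H) : rotate3 (leg23 u) = leg12 u := by
  induction u using TensorProduct.induction_on with
  | zero => simp
  | tmul a b => simp [rotate3, leg12, leg23]
  | add x y hx hy => simp only [map_add, hx, hy]

theorem swap23_leg12 (u : H ⊗[R] H) : swap23 (leg12 u) = leg13 u := by
  induction u using TensorProduct.induction_on with
  | zero => simp
  | tmul a b => simp [swap23, leg12, leg13, Algebra.TensorProduct.congr_apply]
  | add x y hx hy => simp only [map_add, hx, hy]

theorem swap23_leg23 (u : H ⊗[R] H) : swap23 (leg23 u) = leg23 (τ u) := by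
  simp [swap23, leg23, Algebra.TensorProduct.congr_apply]

theorem assoc_tmul_one (u : H ⊗[R] H) :
    Algebra.TensorProduct.assoc R R R H H H (u ⊗ₜ 1) = leg12 u := by
  induction u using TensorProduct.induction_on with
  | zero => simp
  | tmul a b => simp [leg12]
  | add x y hx hy => simp only [TensorProduct.add_tmul, map_add, hx, hy]

end Legs

section Comul

variable {R H : Type*} [CommRing R] [Ring H] [Bialgebra R H]

local notation "τ" => Algebra.TensorProduct.comm R H H

def comulTensorIdAssoc : H ⊗[R] H →ₐ[R] H ⊗[R] (H ⊗[R] H) :=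
  (Algebra.TensorProduct.assoc R R R H H H).toAlgHom.comp (comulTensorId R H)

theorem rotate3_idTensorComul (u : H ⊗[R] H) :
    rotate3 (idTensorComul R H u) = comulTensorIdAssoc (τ u) := by
  induction u using TensorProduct.induction_on with
  | zero => simp
  | tmul a b => simp [rotate3, idTensorComul, comulTensorIdAssoc, comulTensorId]
  | add x y hx hy => simp only [map_add, hx, hy]

theorem rotate3_comulTensorIdAssoc (hcc : IsCocommutative R H) (u : H ⊗[R] H) :
    rotate3 (comulTensorIdAssoc u) = swap23 (comulTensorIdAssoc u) := by
  induction u using TensorProduct.induction_on with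
  | zero => simp
  | add x y hx hy => simp only [map_add, hx, hy]
  | tmul a b =>
    have hrot (w : H ⊗[R] H) : rotate3 (Algebra.TensorProduct.assoc R R R H H H (w ⊗ₜ b)) =
        swap23 (Algebra.TensorProduct.assoc R R R H H H (τ w ⊗ₜ b)) := by
      induction w using TensorProduct.induction_on with
      | zero => simp
      | tmul c d => simp [rotate3, swap23, Algebra.TensorProduct.congr_apply]
      | add x y hx hy => simp only [TensorProduct.add_tmul, map_add, hx, hy]
    simpa [comulTensorIdAssoc, comulTensorId, hcc a] using hrot (Coalgebra.comul (R := R) a)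

theorem swap23_idTensorComul (hcc : IsCocommutative R H) (u : H ⊗[R] H) :
    swap23 (idTensorComul R H u) = idTensorComul R H u := by
  induction u using TensorProduct.induction_on with
  | zero => simp
  | tmul a b => simp [swap23, idTensorComul, Algebra.TensorProduct.congr_apply, hcc b]
  | add x y hx hy => simp only [map_add, hx, hy]

end Comul

section Twist

variable {R H : Type*} [CommRing R] [Ring H] [Bialgebra R H] {F Finv : H ⊗[R] H}

local notation "τ" => Algebra.TensorProduct.comm R H H

theorem IsDrinfeldTwist.cocycle (hF : IsDrinfeldTwist R F Finv) :
    leg12 F * comulTensorIdAssoc F = leg23 F * idTensorComul R H F := by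
  have h := hF.2.2
  change Algebra.TensorProduct.assoc R R R H H H (F ⊗ₜ 1 * comulTensorId R H F) = _ at h
  rwa [map_mul, assoc_tmul_one] at h

theorem IsDrinfeldTwist.map_mul_map_inv (hF : IsDrinfeldTwist R F Finv) {M G : Type*} [Monoid M]
    [FunLike G (H ⊗[R] H) M] [MonoidHomClass G (H ⊗[R] H) M] (φ : G) : φ F * φ Finv = 1 := by
  rw [← map_mul, hF.1, map_one]

theorem IsDrinfeldTwist.map_inv_mul_map (hF : IsDrinfeldTwist R F Finv) {M G : Type*} [Monoid M]
    [FunLike G (H ⊗[R] H) M] [MonoidHomClass G (H ⊗[R] H) M] (φ : G) : φ Finv * φ F = 1 := by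
  rw [← map_mul, hF.2.1, map_one]

theorem IsDrinfeldTwist.inv_cocycle (hF : IsDrinfeldTwist R F Finv) :
    comulTensorIdAssoc Finv * leg12 Finv = idTensorComul R H Finv * leg23 Finv := by
  refine left_inv_eq_right_inv (a := leg12 F * comulTensorIdAssoc F) ?_ ?_
  · rw [mul_assoc, mul_cancel_left_of_mul_eq_one (hF.map_inv_mul_map leg12),
      hF.map_inv_mul_map comulTensorIdAssoc]
  · rw [hF.cocycle, mul_assoc, mul_cancel_left_of_mul_eq_one (hF.map_mul_map_inv _),
      hF.map_mul_map_inv leg23]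

theorem IsDrinfeldTwist.hexagon (hcc : IsCocommutative R H) (hF : IsDrinfeldTwist R F Finv) :
    leg12 F * comulTensorIdAssoc (Rmat R F Finv) * leg12 Finv =
      leg13 (Rmat R F Finv) * leg23 (Rmat R F Finv) := by
  have hrot : leg13 (τ F) * swap23 (comulTensorIdAssoc F) = leg12 F * comulTensorIdAssoc (τ F) := by
    simpa only [map_mul, rotate3_leg12, rotate3_comulTensorIdAssoc hcc, rotate3_leg23,
      rotate3_idTensorComul] using congrArg rotate3 hF.cocycle
  have hswap : swap23 (comulTensorIdAssoc F) =
      leg13 Finv * (leg23 (τ F) * idTensorComul R H F) := by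
    have h : leg13 F * swap23 (comulTensorIdAssoc F) = leg23 (τ F) * idTensorComul R H F := by
      simpa only [map_mul, swap23_leg12, swap23_leg23, swap23_idTensorComul hcc]
        using congrArg swap23 hF.cocycle
    rw [← h, mul_cancel_left_of_mul_eq_one (hF.map_inv_mul_map leg13)]
  have hcancel : idTensorComul R H F * (comulTensorIdAssoc Finv * leg12 Finv) = leg23 Finv := by
    rw [← mul_cancel_left_of_mul_eq_one (hF.map_inv_mul_map leg23) (idTensorComul R H F),
      ← hF.cocycle]
    simp only [mul_assoc]
    rw [mul_cancel_left_of_mul_eq_one (hF.map_mul_map_inv _), hF.map_mul_map_inv leg12, mul_one]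
  simp only [Rmat, map_mul, mul_assoc]
  rw [← mul_assoc (leg12 F), ← hrot, hswap]
  simp only [mul_assoc]
  rw [hcancel]

/-- `F⁻¹` spread over three legs as in `⟨x, [y, z]_⋆⟩_⋆`. -/
def twistInv3 (Finv : H ⊗[R] H) : H ⊗[R] (H ⊗[R] H) :=
  idTensorComul R H Finv * leg23 Finv

theorem IsDrinfeldTwist.rotate3_twistInv3_mul (hcc : IsCocommutative R H)
    (hF : IsDrinfeldTwist R F Finv) :
    rotate3 (twistInv3 Finv * (leg12 (τ (Rmat R F Finv)) * leg13 (τ (Rmat R F Finv)))) =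
      twistInv3 Finv := by
  calc _ = comulTensorIdAssoc (τ Finv) *
        (leg12 Finv * (leg13 (Rmat R F Finv) * leg23 (Rmat R F Finv))) := by
        simp only [twistInv3, map_mul, rotate3_idTensorComul, rotate3_leg23, rotate3_leg12,
          rotate3_leg13, comm_comm_apply, mul_assoc]
    _ = comulTensorIdAssoc (τ Finv * Rmat R F Finv) * leg12 Finv := by
        rw [← hF.hexagon hcc]
        simp only [mul_assoc]
        rw [mul_cancel_left_of_mul_eq_one (hF.map_inv_mul_map leg12), map_mul, mul_assoc]
    _ = comulTensorIdAssoc Finv * leg12 Finv := by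
        rw [Rmat, ← mul_assoc, ← map_mul, hF.2.1, map_one, one_mul]
    _ = twistInv3 Finv := hF.inv_cocycle

end Twist

section LegAction

variable {R H : Type*} [CommRing R] [Ring H] [Algebra R H]
  {M N : Type*} [AddCommGroup M] [Module R M] [AddCommGroup N] [Module R N]

def legActAlgHom (ρM : H →ₐ[R] Module.End R M) (ρN : H →ₐ[R] Module.End R N) :
    H ⊗[R] H →ₐ[R] Module.End R (M ⊗[R] N) :=
  Module.endTensorEndAlgHom.comp (Algebra.TensorProduct.map ρM ρN)

def legAct3AlgHom (ρ : H →ₐ[R] Module.End R M) :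
    H ⊗[R] (H ⊗[R] H) →ₐ[R] Module.End R (M ⊗[R] (M ⊗[R] M)) :=
  Module.endTensorEndAlgHom.comp (Algebra.TensorProduct.map ρ (legActAlgHom ρ ρ))

theorem legAct_mul (ρM : H →ₐ[R] Module.End R M) (ρN : H →ₐ[R] Module.End R N)
    (u v : H ⊗[R] H) : legAct ρM ρN (u * v) = legAct ρM ρN u ∘ₗ legAct ρM ρN v :=
  map_mul (legActAlgHom ρM ρN) u v

theorem legAct3_mul (ρ : H →ₐ[R] Module.End R M) (u v : H ⊗[R] (H ⊗[R] H)) :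
    legAct3 ρ (u * v) = legAct3 ρ u ∘ₗ legAct3 ρ v :=
  map_mul (legAct3AlgHom ρ) u v

theorem legAct_tmul (ρM : H →ₐ[R] Module.End R M) (ρN : H →ₐ[R] Module.End R N) (a b : H) :
    legAct ρM ρN (a ⊗ₜ b) = TensorProduct.map (ρM a) (ρN b) :=
  rfl

theorem legAct3_tmul (ρ : H →ₐ[R] Module.End R M) (a : H) (w : H ⊗[R] H) :
    legAct3 ρ (a ⊗ₜ w) = TensorProduct.map (ρ a) (legAct ρ ρ w) :=
  rfl

end LegAction

section Cycle

variable {R H M : Type*} [CommRing R] [Ring H] [Algebra R H] [AddCommGroup M] [Module R M]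

/-- `x ⊗ (y ⊗ z) ↦ z ⊗ (x ⊗ y)`. -/
def cycle3 : M ⊗[R] (M ⊗[R] M) →ₗ[R] M ⊗[R] (M ⊗[R] M) :=
  (TensorProduct.comm R (M ⊗[R] M) M).toLinearMap ∘ₗ (TensorProduct.assoc R M M M).symm.toLinearMap

theorem cycle3_tmul (x y z : M) : cycle3 (x ⊗ₜ[R] (y ⊗ₜ[R] z)) = z ⊗ₜ (x ⊗ₜ y) :=
  rfl

theorem legAct3_comp_cycle3 (ρ : H →ₐ[R] Module.End R M) (Z : H ⊗[R] (H ⊗[R] H)) :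
    legAct3 ρ Z ∘ₗ cycle3 = cycle3 ∘ₗ legAct3 ρ (rotate3 Z) := by
  induction Z using TensorProduct.induction_on with
  | zero => simp
  | add Z Z' hZ hZ' => simp only [map_add, LinearMap.add_comp, LinearMap.comp_add, hZ, hZ']
  | tmul a w =>
    induction w using TensorProduct.induction_on with
    | zero => simp
    | add w w' hw hw' =>
      simp only [TensorProduct.tmul_add, map_add, LinearMap.add_comp, LinearMap.comp_add, hw, hw']
    | tmul b c =>
      refine TensorProduct.ext_threefold' fun x y z => ?_
      simp [cycle3_tmul, rotate3, legAct3_tmul, legAct_tmul]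

end Cycle

section StarLie

variable {R H L : Type*} [CommRing R] [Ring H] [Bialgebra R H] [LieRing L] [LieAlgebra R L]

def bracketForm (b : L →ₗ[R] L →ₗ[R] R) : L ⊗[R] (L ⊗[R] L) →ₗ[R] R :=
  TensorProduct.lift b ∘ₗ (TensorProduct.lift (lieBil R L)).lTensor L

theorem bracketForm_comp_cycle3 {b : L →ₗ[R] L →ₗ[R] R}
    (hbcyc : ∀ v₀ v₁ v₂ : L, b v₀ ⁅v₁, v₂⁆ = b v₂ ⁅v₀, v₁⁆) :
    bracketForm b ∘ₗ cycle3 = bracketForm b :=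
  TensorProduct.ext_threefold' fun x y z => (hbcyc x y z).symm

variable {ρ : H →ₐ[R] Module.End R L}

theorem IsHLieAlgebra.comp_lift_lieBil (hL : IsHLieAlgebra R ρ) (h : H) :
    ρ h ∘ₗ TensorProduct.lift (lieBil R L) =
      TensorProduct.lift (lieBil R L) ∘ₗ legAct ρ ρ (Coalgebra.comul (R := R) h) :=
  TensorProduct.ext' fun x y => hL h x y

theorem IsHLieAlgebra.legAct_comp_lTensor_lift_lieBil (hL : IsHLieAlgebra R ρ) (u : H ⊗[R] H) :
    legAct ρ ρ u ∘ₗ (TensorProduct.lift (lieBil R L)).lTensor L =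
      (TensorProduct.lift (lieBil R L)).lTensor L ∘ₗ legAct3 ρ (idTensorComul R H u) := by
  induction u using TensorProduct.induction_on with
  | zero => simp
  | add u u' hu hu' => simp only [map_add, LinearMap.add_comp, LinearMap.comp_add, hu, hu']
  | tmul a b =>
    simp only [legAct_tmul, idTensorComul, Algebra.TensorProduct.map_tmul, AlgHom.id_apply,
      Bialgebra.comulAlgHom_apply, legAct3_tmul, LinearMap.lTensor_def, ← TensorProduct.map_comp,
      hL.comp_lift_lieBil, LinearMap.id_comp, LinearMap.comp_id]

theorem legAct3_leg23 (u : H ⊗[R] H) : legAct3 ρ (leg23 u) = (legAct ρ ρ u).lTensor L := by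
  rw [leg23, Algebra.TensorProduct.includeRight_apply, legAct3_tmul, map_one]
  rfl

theorem IsHLieAlgebra.starPair_comp_starBracket (hL : IsHLieAlgebra R ρ) (b : L →ₗ[R] L →ₗ[R] R)
    (Finv : H ⊗[R] H) :
    starPair ρ b Finv ∘ₗ (starBracket ρ Finv).lTensor L =
      bracketForm b ∘ₗ legAct3 ρ (twistInv3 Finv) := by
  rw [twistInv3, legAct3_mul, legAct3_leg23, bracketForm, starPair, starBracket,
    LinearMap.lTensor_comp]
  simp only [LinearMap.comp_assoc]
  rw [← LinearMap.comp_assoc _ (legAct3 ρ _), ← hL.legAct_comp_lTensor_lift_lieBil,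
    LinearMap.comp_assoc]

end StarLie

theorem starPair_braided_cyclic_general
    (R : Type*) [CommRing R] (H : Type*) [Ring H] [Bialgebra R H]
    (hcc : IsCocommutative R H)
    (L : Type*) [LieRing L] [LieAlgebra R L]
    (ρ : H →ₐ[R] Module.End R L) (hL : IsHLieAlgebra R ρ)
    (b : L →ₗ[R] L →ₗ[R] R)
    (hbcyc : ∀ v₀ v₁ v₂ : L, b v₀ ⁅v₁, v₂⁆ = b v₂ ⁅v₀, v₁⁆)
    (F Finv : H ⊗[R] H) (hF : IsDrinfeldTwist R F Finv) :
    ∀ v₀ v₁ v₂ : L,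
      starPair ρ b Finv (v₀ ⊗ₜ[R] (starBracket ρ Finv (v₁ ⊗ₜ[R] v₂))) =
        ((starPair ρ b Finv).comp
            (TensorProduct.map LinearMap.id (starBracket ρ Finv)))
          (legAct3 ρ
            (((Algebra.TensorProduct.map (AlgHom.id R H)
                  Algebra.TensorProduct.includeLeft)
                ((Algebra.TensorProduct.comm R H H) (Rmat R F Finv))) *
              ((Algebra.TensorProduct.map (AlgHom.id R H)
                  Algebra.TensorProduct.includeRight)
                ((Algebra.TensorProduct.comm R H H) (Rmat R F Finv))))
            (v₂ ⊗ₜ[R] (v₀ ⊗ₜ[R] v₁))) := by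
  intro v₀ v₁ v₂
  set X : H ⊗[R] (H ⊗[R] H) := leg12 (Algebra.TensorProduct.comm R H H (Rmat R F Finv)) *
    leg13 (Algebra.TensorProduct.comm R H H (Rmat R F Finv))
  calc _ = bracketForm b (legAct3 ρ (twistInv3 Finv) (v₀ ⊗ₜ (v₁ ⊗ₜ v₂))) := by
        rw [← LinearMap.comp_apply, ← hL.starPair_comp_starBracket]
        rfl
    _ = bracketForm b (cycle3 (legAct3 ρ (rotate3 (twistInv3 Finv * X)) (v₀ ⊗ₜ (v₁ ⊗ₜ v₂)))) := by
        rw [hF.rotate3_twistInv3_mul hcc, ← LinearMap.comp_apply (bracketForm b) cycle3,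
          bracketForm_comp_cycle3 hbcyc]
    _ = bracketForm b (legAct3 ρ (twistInv3 Finv * X) (v₂ ⊗ₜ (v₀ ⊗ₜ v₁))) := by
        rw [← cycle3_tmul v₀ v₁ v₂, ← LinearMap.comp_apply (legAct3 ρ _) cycle3,
          legAct3_comp_cycle3]
        rfl
    _ = _ := by
        rw [legAct3_mul, LinearMap.comp_apply, ← LinearMap.comp_apply (bracketForm b),
          ← hL.starPair_comp_starBracket]
        rfl

/-- For a Drinfel'd twist on a cocommutative bialgebra `H` and a Lie
algebra `L` in `H`-modules with an `H`-invariant bilinear form `b` that is cyclic with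
respect to the bracket, the twisted pairing is braided cyclic with respect to the
twisted bracket:
`⟨v₀, [v₁, v₂]_⋆⟩_⋆ = Σ_{k,l} ⟨R_k(R_l(v₂)), [R^k(v₀), R^l(v₁)]_⋆⟩_⋆`,
where `ℛ⁻¹ = τ(ℛ) = Σ_k R_k ⊗ R^k`. -/
theorem starPair_braided_cyclic
    (R : Type*) [CommRing R] (H : Type*) [Ring H] [Bialgebra R H]
    (hcc : IsCocommutative R H)
    (L : Type*) [LieRing L] [LieAlgebra R L]
    (ρ : H →ₐ[R] Module.End R L) (hL : IsHLieAlgebra R ρ)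
    (b : L →ₗ[R] L →ₗ[R] R)
    (hbinv : ∀ (h : H) (v w : L),
      TensorProduct.lift b (legAct ρ ρ (Coalgebra.comul (R := R) h) (v ⊗ₜ[R] w)) =
        Coalgebra.counit (R := R) h * b v w)
    (hbcyc : ∀ v₀ v₁ v₂ : L, b v₀ ⁅v₁, v₂⁆ = b v₂ ⁅v₀, v₁⁆)
    (F Finv : H ⊗[R] H) (hF : IsDrinfeldTwist R F Finv) :
    ∀ v₀ v₁ v₂ : L,
      starPair ρ b Finv (v₀ ⊗ₜ[R] (starBracket ρ Finv (v₁ ⊗ₜ[R] v₂))) =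
        ((starPair ρ b Finv).comp
            (TensorProduct.map LinearMap.id (starBracket ρ Finv)))
          (legAct3 ρ
            (((Algebra.TensorProduct.map (AlgHom.id R H)
                  Algebra.TensorProduct.includeLeft)
                ((Algebra.TensorProduct.comm R H H) (Rmat R F Finv))) *
              ((Algebra.TensorProduct.map (AlgHom.id R H)
                  Algebra.TensorProduct.includeRight)
                ((Algebra.TensorProduct.comm R H H) (Rmat R F Finv))))
            (v₂ ⊗ₜ[R] (v₀ ⊗ₜ[R] v₁))) :=
  starPair_braided_cyclic_general R H hcc L ρ hL b hbcyc F Finv hF
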